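/- For every polynomial E ∈ ℚ(q)[x], the linear form Ψ satisfies the shift identity q·Ψ(E(1+qx)) − Ψ(E) = (q−1)·E(0) + E'(0), where E' is the derivative of E. -/

import Mathlib

/-! The values of Σ at the points [n]_q telescope: since 1 + (q - 1)[n]_q = q^n and
1 + q[n]_q = [n+1]_q, the polynomials ΣE and q(Σ(E(1+qx)) - (1 + (q-1)x) E(1+qx)) + E(0)
agree at every [n]_q. These points are pairwise distinct because q is not a root of unity, so
the two polynomials are equal. Differentiating this identity at x = -1/q, where 1 + qx vanishes
and 1 + (q-1)x = 1/q, gives the shift identity. -/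

open Polynomial Finset

noncomputable section

/-- The field ℚ(q) of rational functions. -/
abbrev K : Type := RatFunc ℚ

/-- The variable q of ℚ(q). -/
def qq : K := RatFunc.X

/-- The q-integer [n]_t = (t^n - 1)/(t - 1), for n ∈ ℤ. -/
def qint (t : K) (n : ℤ) : K := (t ^ n - 1) / (t - 1)

/-- The q-factorial [n]!_t. -/
def qfact (t : K) (n : ℕ) : K := ∏ i ∈ range n, qint t (i + 1)

/-- The generalized q-binomial qbinom(m, n)_t = [m]_t [m-1]_t ⋯ [m-n+1]_t / [n]!_t. -/
def qbinom (t : K) (m : ℤ) (n : ℕ) : K := (∏ i ∈ range n, qint t (m - i)) / qfact t n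

/-- The q-binomial with the vanishing convention: 0 unless 0 ≤ n ≤ m. -/
def qbinomv (t : K) (m n : ℤ) : K :=
  if 0 ≤ n ∧ n ≤ m then (∏ i ∈ range n.toNat, qint t (m - i)) / qfact t n.toNat else 0

/-- The polynomial [n, x]_t = [n]_t + t^n x. -/
def qb (t : K) (n : ℤ) : Polynomial K := C (qint t n) + C (t ^ n) * X

/-- The polynomial qbase(m, x, n)_t = [m-n+1,x]_t ⋯ [m,x]_t / [n]!_t. -/
def qbase (t : K) (m : ℤ) (n : ℕ) : Polynomial K :=
  (∏ i ∈ range n, qb t (m - n + 1 + i)) * C (qfact t n)⁻¹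

/-- The linear form V: essentially (1/q) times the derivative at x = [-1]_q = -1/q. -/
def qV (E : Polynomial K) : K := (Polynomial.derivative E).eval (-qq⁻¹) / qq

/-- The defining property of the q-summation operator Σ:
(ΣE)([n]_q) = Σ_{j=0}^n q^j E([j]_q) for all n ≥ 0. -/
def IsQSigma (S : Polynomial K →ₗ[K] Polynomial K) : Prop :=
  ∀ E : Polynomial K, ∀ n : ℕ,
    (S E).eval (qint qq n) = ∑ j ∈ range (n + 1), qq ^ j * E.eval (qint qq j)

lemma qint_zero (t : K) : qint t 0 = 0 := by simp [qint]

lemma one_add_sub_one_mul_qint {t : K} (ht : t ≠ 1) (n : ℕ) :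
    1 + (t - 1) * qint t n = t ^ n := by
  rw [qint, zpow_natCast, mul_div_cancel₀ _ (sub_ne_zero.mpr ht)]
  ring

lemma qint_natCast_succ {t : K} (ht : t ≠ 1) (n : ℕ) :
    qint t (n + 1 : ℕ) = 1 + t * qint t n := by
  have h := one_add_sub_one_mul_qint ht
  apply mul_left_cancel₀ (sub_ne_zero.mpr ht)
  linear_combination h (n + 1) - t * h n

lemma qint_natCast_injective {t : K} (ht : Function.Injective fun n : ℕ => t ^ n) :
    Function.Injective fun n : ℕ => qint t n := by
  intro m n hmn
  have ht1 : t ≠ 1 := fun h => zero_ne_one (ht (by simp [h]))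
  apply ht
  simp only [← one_add_sub_one_mul_qint ht1, hmn]

lemma qq_pow_injective : Function.Injective fun n : ℕ => qq ^ n := by
  have h := (RatFunc.algebraMap_injective ℚ).comp
    (pow_injective_of_not_isUnit not_isUnit_X X_ne_zero)
  simpa [Function.comp_def, qq] using h

lemma Polynomial.eq_of_eval_qint_eq {t : K} (ht : Function.Injective fun n : ℕ => t ^ n)
    {P Q : K[X]} (h : ∀ n : ℕ, P.eval (qint t n) = Q.eval (qint t n)) : P = Q :=
  eq_of_infinite_eval_eq P Q <|
    Set.infinite_of_injective_forall_mem (qint_natCast_injective ht) h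

lemma eval_qint_comp_shift {t : K} (ht : t ≠ 1) (P : K[X]) (n : ℕ) :
    (P.comp (1 + C t * X)).eval (qint t n) = P.eval (qint t (n + 1 : ℕ)) := by
  rw [eval_comp, qint_natCast_succ ht]
  simp

lemma eval_neg_inv_derivative_comp {F : Type*} [Field F] {t : F} (ht : t ≠ 0) (P : F[X]) :
    (derivative (P.comp (1 + C t * X))).eval (-t⁻¹) = t * (derivative P).eval 0 := by
  have hroot : (1 + C t * X).eval (-t⁻¹) = 0 := by simp [mul_inv_cancel₀ ht]
  rw [derivative_comp, eval_mul, eval_comp, hroot]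
  simp

theorem IsQSigma.eq_shift {S : K[X] →ₗ[K] K[X]} (hS : IsQSigma S) (E : K[X]) :
    S E = C qq * (S (E.comp (1 + C qq * X)) - (1 + (C qq - 1) * X) * E.comp (1 + C qq * X))
      + C (E.eval 0) := by
  have hq : qq ≠ 1 := fun h => zero_ne_one (qq_pow_injective (by simp [h]))
  refine Polynomial.eq_of_eval_qint_eq qq_pow_injective fun n => ?_
  simp only [eval_add, eval_mul, eval_sub, eval_one, eval_C, eval_X,
    one_add_sub_one_mul_qint hq, eval_qint_comp_shift hq]
  rw [hS, hS, Finset.sum_range_succ', Finset.sum_range_succ _ n]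
  simp only [eval_qint_comp_shift hq, Nat.cast_zero, qint_zero, pow_zero, one_mul, pow_succ',
    mul_assoc, mul_add, mul_sub, Finset.mul_sum]
  ring

theorem psi_shift (S : Polynomial K →ₗ[K] Polynomial K) (hS : IsQSigma S) (E : Polynomial K) :
    qq * qV (S (E.comp (1 + C qq * X))) - qV (S E) =
      (qq - 1) * E.eval 0 + (Polynomial.derivative E).eval 0 := by
  have hq : qq ≠ 0 := RatFunc.X_ne_zero
  have h := congrArg (fun P => (derivative P).eval (-qq⁻¹)) (hS.eq_shift E)
  simp only [derivative_add, derivative_mul, derivative_sub, derivative_C, derivative_one,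
    derivative_X, eval_add, eval_mul, eval_sub, eval_C, eval_one, eval_X, eval_comp, eval_zero,
    eval_neg_inv_derivative_comp hq, mul_neg, mul_inv_cancel₀ hq] at h
  rw [qV, qV, h, add_neg_cancel]
  field_simp
  ring

end
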